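/- arXiv:1009.5072 — 2 statements merged into one kernel-verified Lean document; each statement's English description precedes it below -/
import Mathlib

section
/- Let X, Y be finite sets, Θ compact, p(x,y|θ) continuous in θ. If π̂ ∈ P maximizes the conditional mutual information I_{θ,y|x}(π) over P and p_{π̂}(x) > 0 for every x ∈ X, then the Bayesian predictive density p_{π̂}(y|x) is minimax: sup_{θ∈Θ} R(θ, p_{π̂}(·|·)) = inf_q sup_{θ∈Θ} R(θ, q), where the infimum is over all predictive densities q. -/
open MeasureTheory

noncomputable def negEnt (u : ℝ) : ℝ := u * Real.log u

noncomputable def pMix {Θ X Y : Type*} [MeasurableSpace Θ]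
    (p : X → Y → Θ → ℝ) (π : ProbabilityMeasure Θ) (x : X) (y : Y) : ℝ :=
  ∫ θ, p x y θ ∂(π : Measure Θ)

noncomputable def condMutualInfo {Θ X Y : Type*} [MeasurableSpace Θ] [Fintype X] [Fintype Y]
    (p : X → Y → Θ → ℝ) (π : ProbabilityMeasure Θ) : ℝ :=
  (∫ θ, ∑ x : X, ∑ y : Y, negEnt (p x y θ) ∂(π : Measure Θ))
    - ∑ x : X, ∑ y : Y, negEnt (pMix p π x y)
    - (∫ θ, ∑ x : X, negEnt (∑ y : Y, p x y θ) ∂(π : Measure Θ))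
    + ∑ x : X, negEnt (∑ y : Y, pMix p π x y)

def IsPredDensity {X Y : Type*} [Fintype Y] (q : X → Y → ℝ) : Prop :=
  (∀ x y, 0 ≤ q x y ∧ q x y ≤ 1) ∧ ∀ x, ∑ y : Y, q x y = 1

/-- `a log(b/c)` with the conventions `0 log 0 = 0`, `0 log(c/0) = 0`, `a log(b/0) = +∞`
for `a > 0`. -/
noncomputable def klTerm (a b c : ℝ) : EReal :=
  if a = 0 then 0 else if c = 0 then ⊤ else ((a * Real.log (b / c) : ℝ) : EReal)

/-- KL risk `R(θ,q) = Σ_{x,y} p(x,y|θ) log( p(y|x,θ)/q(y;x) )`. -/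
noncomputable def risk {Θ X Y : Type*} [Fintype X] [Fintype Y]
    (p : X → Y → Θ → ℝ) (q : X → Y → ℝ) (θ : Θ) : EReal :=
  ∑ x : X, ∑ y : Y, klTerm (p x y θ) (p x y θ / ∑ y' : Y, p x y' θ) (q x y)

/-!
Write `D(θ, q)` for the conditional divergence `condKL` of a predictive density `q` from
`p(·|θ)`, and `m_π` for the Bayes marginal of a prior `π`. For every `q`,
`∫ D(θ, q) dπ = I(π) + D(m_π ‖ q)`, so by Gibbs' inequality the prior-averaged risk of any `q`,
and hence its worst-case risk, is at least `I(π̂)`. Conversely, maximality of `I` at `π̂` along the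
segment from `π̂` to a point mass `δ_θ` gives `D(θ, q_t) ≤ I(π̂)` for the Bayes predictive densities
`q_t` of `(1 - t) π̂ + t δ_θ`. As `t → 0` these tend to the Bayes predictive density of `π̂`;
the bound first forces `p(·|θ)` to vanish where `m_π̂` does (otherwise `D(θ, q_t) → ∞`), and then
passes to the limit, so that `R(θ, p_π̂) ≤ I(π̂)` for every `θ`.
-/

open Filter Topology unitInterval

@[fun_prop]
lemma continuous_negEnt : Continuous negEnt := Real.continuous_mul_log

namespace EReal

lemma coe_finset_sum {ι : Type*} (s : Finset ι) (f : ι → ℝ) :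
    ((∑ i ∈ s, f i : ℝ) : EReal) = ∑ i ∈ s, (f i : EReal) :=
  (congrArg WithBot.some (WithTop.coe_sum s f)).trans (WithBot.coe_sum s _)

lemma finset_sum_ne_bot {ι : Type*} {s : Finset ι} {f : ι → EReal} (hf : ∀ i ∈ s, f i ≠ ⊥) :
    ∑ i ∈ s, f i ≠ ⊥ := by
  induction s using Finset.cons_induction with
  | empty => simp
  | cons a s ha ih =>
    rw [Finset.sum_cons]
    simp only [Finset.mem_cons, forall_eq_or_imp] at hf
    exact add_ne_bot_iff.2 ⟨hf.1, ih hf.2⟩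

lemma finset_sum_eq_top {ι : Type*} {s : Finset ι} {f : ι → EReal} (hf : ∀ i ∈ s, f i ≠ ⊥)
    {i : ι} (hi : i ∈ s) (htop : f i = ⊤) : ∑ j ∈ s, f j = ⊤ := by
  classical
  rw [← Finset.add_sum_erase s f hi, htop]
  exact top_add_of_ne_bot (finset_sum_ne_bot fun j hj => hf j (Finset.mem_of_mem_erase hj))

end EReal

section Tables

variable {X Y : Type*} [Fintype Y]

noncomputable def condPred (r : X → Y → ℝ) (x : X) (y : Y) : ℝ :=
  r x y / ∑ y', r x y'

lemma isPredDensity_condPred {r : X → Y → ℝ} (hr : ∀ x y, 0 ≤ r x y)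
    (hpos : ∀ x, 0 < ∑ y, r x y) : IsPredDensity (condPred r) :=
  ⟨fun x y => ⟨div_nonneg (hr x y) (hpos x).le,
      div_le_one_of_le₀ (Finset.single_le_sum (fun y' _ => hr x y') (Finset.mem_univ y))
        (hpos x).le⟩,
    fun x => by simp only [condPred, ← Finset.sum_div, div_self (hpos x).ne']⟩

lemma mul_log_condPred {r : X → Y → ℝ} (hr : ∀ x y, 0 ≤ r x y) (x : X) (y : Y) :
    r x y * Real.log (condPred r x y) = negEnt (r x y) - r x y * Real.log (∑ y', r x y') := by
  rcases (hr x y).eq_or_lt with h | h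
  · simp [← h, negEnt]
  · have hx : 0 < ∑ y', r x y' :=
      h.trans_le (Finset.single_le_sum (fun y' _ => hr x y') (Finset.mem_univ y))
    rw [condPred, Real.log_div h.ne' hx.ne', negEnt]
    ring

lemma tendsto_condPred_mix (m r : X → Y → ℝ) {x : X} (hx : ∑ y, m x y ≠ 0) (y : Y) :
    Tendsto (fun t : ℝ => condPred ((1 - t) • m + t • r) x y) (𝓝 0) (𝓝 (condPred m x y)) := by
  have hmix : ∀ y, Tendsto (fun t : ℝ => ((1 - t) • m + t • r) x y) (𝓝 0) (𝓝 (m x y)) := by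
    intro y
    have : Continuous fun t : ℝ => ((1 - t) • m + t • r) x y := by
      simp only [Pi.add_apply, Pi.smul_apply, smul_eq_mul]
      fun_prop
    simpa using this.tendsto 0
  exact (hmix y).div (tendsto_finsetSum _ fun y' _ => hmix y') hx

lemma sum_mix_pos {m r : X → Y → ℝ} (hr : ∀ x y, 0 ≤ r x y) {x : X} (hmx : 0 < ∑ y, m x y)
    {t : ℝ} (ht : t ∈ Set.Ioo 0 1) : 0 < ∑ y, ((1 - t) • m + t • r) x y :=
  calc 0 < (1 - t) * ∑ y, m x y := mul_pos (sub_pos.2 ht.2) hmx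
    _ ≤ ∑ y, ((1 - t) • m + t • r) x y := by
      rw [Finset.mul_sum]
      exact Finset.sum_le_sum fun y _ => le_add_of_nonneg_right (mul_nonneg ht.1.le (hr x y))

lemma isPredDensity_condPred_mix {m r : X → Y → ℝ} (hm : ∀ x y, 0 ≤ m x y)
    (hr : ∀ x y, 0 ≤ r x y) (hmx : ∀ x, 0 < ∑ y, m x y) {t : ℝ} (ht : t ∈ Set.Ioo 0 1) :
    IsPredDensity (condPred ((1 - t) • m + t • r)) :=
  isPredDensity_condPred (fun x y => add_nonneg (mul_nonneg (sub_pos.2 ht.2).le (hm x y))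
    (mul_nonneg ht.1.le (hr x y))) fun _ => sum_mix_pos hr (hmx _) ht

lemma eq_zero_of_condPred_mix_eq_zero {m r : X → Y → ℝ} (hm : ∀ x y, 0 ≤ m x y)
    (hr : ∀ x y, 0 ≤ r x y) {x : X} {y : Y} (hmx : 0 < ∑ y, m x y) {t : ℝ}
    (ht : t ∈ Set.Ioo 0 1) (h : condPred ((1 - t) • m + t • r) x y = 0) : m x y = 0 := by
  have hmix : (1 - t) * m x y + t * r x y = 0 :=
    (div_eq_zero_iff.1 h).resolve_right (sum_mix_pos hr hmx ht).ne'
  rw [add_eq_zero_iff_of_nonneg (mul_nonneg (sub_pos.2 ht.2).le (hm x y))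
    (mul_nonneg ht.1.le (hr x y))] at hmix
  exact (mul_eq_zero.1 hmix.1).resolve_left (sub_pos.2 ht.2).ne'

variable [Fintype X]

/-- `-H(Y|X)` for a joint table `r(x,y)`. -/
noncomputable def negCondEnt (r : X → Y → ℝ) : ℝ :=
  ∑ x, ∑ y, negEnt (r x y) - ∑ x, negEnt (∑ y, r x y)

noncomputable def crossEnt (r q : X → Y → ℝ) : ℝ :=
  ∑ x, ∑ y, r x y * Real.log (q x y)

/-- The conditional Kullback-Leibler divergence of `q` from `r`; it is the real value of the
risk when `q` vanishes only where `r` does. -/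
noncomputable def condKL (r q : X → Y → ℝ) : ℝ :=
  negCondEnt r - crossEnt r q

lemma crossEnt_condPred {r : X → Y → ℝ} (hr : ∀ x y, 0 ≤ r x y) :
    crossEnt r (condPred r) = negCondEnt r := by
  simp only [crossEnt, negCondEnt, mul_log_condPred hr, Finset.sum_sub_distrib, ← Finset.sum_mul,
    negEnt]

/-- Gibbs' inequality, row by row. -/
lemma crossEnt_le_negCondEnt {r q : X → Y → ℝ} (hr : ∀ x y, 0 ≤ r x y) (hq : IsPredDensity q)
    (hsupp : ∀ x y, q x y = 0 → r x y = 0) : crossEnt r q ≤ negCondEnt r := by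
  rw [← crossEnt_condPred hr]
  -- `log u ≤ u - 1` at `u = q / condPred r`
  have hterm : ∀ x y, r x y * Real.log (q x y)
      ≤ r x y * Real.log (condPred r x y) + (q x y * ∑ y', r x y' - r x y) := by
    intro x y
    rcases (hr x y).eq_or_lt with h | h
    · simpa [← h] using mul_nonneg (hq.1 x y).1 (Finset.sum_nonneg fun y' _ => hr x y')
    · have hq0 : 0 < q x y := (hq.1 x y).1.lt_of_ne fun h0 => h.ne' (hsupp x y h0.symm)
      have hx : 0 < ∑ y', r x y' :=
        h.trans_le (Finset.single_le_sum (fun y' _ => hr x y') (Finset.mem_univ y))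
      have hlog := Real.log_le_sub_one_of_pos (div_pos hq0 (div_pos h hx))
      rw [Real.log_div hq0.ne' (div_pos h hx).ne'] at hlog
      have := mul_le_mul_of_nonneg_left hlog h.le
      rw [condPred]
      field_simp at this ⊢
      linarith
  have hrow : ∀ x, ∑ y, (q x y * ∑ y', r x y' - r x y) = 0 := fun x => by
    rw [Finset.sum_sub_distrib, ← Finset.sum_mul, hq.2 x, one_mul, sub_self]
  calc crossEnt r q
      ≤ ∑ x, ∑ y, (r x y * Real.log (condPred r x y) + (q x y * ∑ y', r x y' - r x y)) :=
        Finset.sum_le_sum fun x _ => Finset.sum_le_sum fun y _ => hterm x y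
    _ = crossEnt r (condPred r) := by
        simp only [Finset.sum_add_distrib, hrow, add_zero, crossEnt]

lemma crossEnt_le_mul_log {r q : X → Y → ℝ} (hr : ∀ x y, 0 ≤ r x y) (hq : IsPredDensity q)
    (x : X) (y : Y) : crossEnt r q ≤ r x y * Real.log (q x y) := by
  have hterm : ∀ i : X × Y, 0 ≤ -(r i.1 i.2 * Real.log (q i.1 i.2)) := fun i =>
    neg_nonneg.2 (mul_nonpos_of_nonneg_of_nonpos (hr i.1 i.2)
      (Real.log_nonpos (hq.1 i.1 i.2).1 (hq.1 i.1 i.2).2))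
  have h := Finset.single_le_sum (fun i _ => hterm i) (Finset.mem_univ (x, y))
  rw [Fintype.sum_prod_type] at h
  simp only [Finset.sum_neg_distrib] at h
  unfold crossEnt
  linarith

lemma eq_zero_of_forall_condKL_condPred_mix_le {m r : X → Y → ℝ} (hm : ∀ x y, 0 ≤ m x y)
    (hr : ∀ x y, 0 ≤ r x y) (hmx : ∀ x, 0 < ∑ y, m x y) {C : ℝ}
    (hC : ∀ t ∈ Set.Ioo (0 : ℝ) 1, condKL r (condPred ((1 - t) • m + t • r)) ≤ C)
    {x : X} {y : Y} (hmxy : m x y = 0) : r x y = 0 := by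
  by_contra hrxy
  have hrpos : 0 < r x y := (hr x y).lt_of_ne' hrxy
  set q : ℝ → X → Y → ℝ := fun t => condPred ((1 - t) • m + t • r)
  have hIoo : ∀ᶠ t in 𝓝[>] (0 : ℝ), t ∈ Set.Ioo 0 1 := Ioo_mem_nhdsGT one_pos
  have hq : Tendsto (fun t => q t x y) (𝓝[>] 0) (𝓝[>] 0) := by
    refine tendsto_nhdsWithin_iff.2 ⟨?_, hIoo.mono fun t ht => ?_⟩
    · simpa [q, condPred, hmxy] using
        (tendsto_condPred_mix m r (hmx x).ne' y).mono_left nhdsWithin_le_nhds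
    · refine div_pos ?_ (sum_mix_pos hr (hmx x) ht)
      simpa [hmxy] using mul_pos ht.1 hrpos
  have hblow : Tendsto (fun t => negCondEnt r - r x y * Real.log (q t x y)) (𝓝[>] 0) atTop := by
    simp only [sub_eq_add_neg]
    exact tendsto_atTop_add_const_left _ _ (tendsto_neg_atBot_atTop.comp
      ((Real.tendsto_log_nhdsGT_zero.comp hq).const_mul_atBot hrpos))
  have hlow : ∀ᶠ t in 𝓝[>] (0 : ℝ), negCondEnt r - r x y * Real.log (q t x y) ≤ condKL r (q t) :=
    hIoo.mono fun t ht =>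
      sub_le_sub_left (crossEnt_le_mul_log hr (isPredDensity_condPred_mix hm hr hmx ht) x y) _
  obtain ⟨t, ht, hgt⟩ :=
    (hIoo.and ((tendsto_atTop_mono' _ hlow hblow).eventually_gt_atTop C)).exists
  exact (hC t ht).not_gt hgt

lemma condKL_condPred_le_of_forall_condKL_condPred_mix_le {m r : X → Y → ℝ}
    (hm : ∀ x y, 0 ≤ m x y) (hr : ∀ x y, 0 ≤ r x y) (hmx : ∀ x, 0 < ∑ y, m x y) {C : ℝ}
    (hC : ∀ t ∈ Set.Ioo (0 : ℝ) 1, condKL r (condPred ((1 - t) • m + t • r)) ≤ C) :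
    condKL r (condPred m) ≤ C := by
  have hlim : Tendsto (fun t : ℝ => condKL r (condPred ((1 - t) • m + t • r))) (𝓝[>] 0)
      (𝓝 (condKL r (condPred m))) := by
    refine tendsto_const_nhds.sub
      (tendsto_finsetSum _ fun x _ => tendsto_finsetSum _ fun y _ => ?_)
    rcases eq_or_ne (r x y) 0 with h | h
    · simpa only [h, zero_mul] using tendsto_const_nhds
    · have hmxy : m x y ≠ 0 := fun h0 =>
        h (eq_zero_of_forall_condKL_condPred_mix_le hm hr hmx hC h0)
      exact tendsto_const_nhds.mul (((tendsto_condPred_mix m r (hmx x).ne' y).mono_left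
        nhdsWithin_le_nhds).log (div_ne_zero hmxy (hmx x).ne'))
  exact le_of_tendsto hlim (Filter.mem_of_superset (Ioo_mem_nhdsGT one_pos) hC)

end Tables

lemma klTerm_eq_coe {a b c : ℝ} (h : c = 0 → a = 0) :
    klTerm a b c = ((a * Real.log (b / c) : ℝ) : EReal) := by
  unfold klTerm
  split_ifs with ha hc
  · simp [ha]
  · exact absurd (h hc) ha
  · rfl

lemma klTerm_ne_bot (a b c : ℝ) : klTerm a b c ≠ ⊥ := by
  unfold klTerm
  split_ifs <;> simp [-EReal.coe_mul]

section Risk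

variable {Θ X Y : Type*} [Fintype X] [Fintype Y]

lemma risk_eq_coe_condKL {p : X → Y → Θ → ℝ} {q : X → Y → ℝ} {θ : Θ}
    (hp : ∀ x y, 0 ≤ p x y θ) (hsupp : ∀ x y, q x y = 0 → p x y θ = 0) :
    risk p q θ = (condKL (p · · θ) q : EReal) := by
  have hterm : ∀ x y, p x y θ * Real.log (p x y θ / (∑ y', p x y' θ) / q x y)
      = p x y θ * Real.log (condPred (p · · θ) x y) - p x y θ * Real.log (q x y) := by
    intro x y
    rcases (hp x y).eq_or_lt with h | h
    · simp [← h]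
    · have hx : 0 < ∑ y', p x y' θ :=
        h.trans_le (Finset.single_le_sum (fun y' _ => hp x y') (Finset.mem_univ y))
      have hq : q x y ≠ 0 := fun h0 => h.ne' (hsupp x y h0)
      rw [condPred, Real.log_div (div_pos h hx).ne' hq]
      ring
  rw [condKL, ← crossEnt_condPred hp, crossEnt, crossEnt, ← Finset.sum_sub_distrib,
    EReal.coe_finset_sum]
  refine Finset.sum_congr rfl fun x _ => ?_
  rw [← Finset.sum_sub_distrib, EReal.coe_finset_sum]
  exact Finset.sum_congr rfl fun y _ => by rw [klTerm_eq_coe (hsupp x y), hterm]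

lemma risk_eq_top {p : X → Y → Θ → ℝ} {q : X → Y → ℝ} {θ : Θ} {x : X} {y : Y}
    (hq : q x y = 0) (hp : p x y θ ≠ 0) : risk p q θ = ⊤ := by
  have hklTop : klTerm (p x y θ) (p x y θ / ∑ y', p x y' θ) (q x y) = ⊤ := by
    rw [klTerm, if_neg hp, if_pos hq]
  exact EReal.finset_sum_eq_top (fun x _ => EReal.finset_sum_ne_bot fun y _ => klTerm_ne_bot _ _ _)
    (Finset.mem_univ x)
    (EReal.finset_sum_eq_top (fun y _ => klTerm_ne_bot _ _ _) (Finset.mem_univ y) hklTop)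

lemma continuous_condKL [TopologicalSpace Θ] {p : X → Y → Θ → ℝ}
    (hc : ∀ x y, Continuous (p x y)) (q : X → Y → ℝ) : Continuous fun θ => condKL (p · · θ) q := by
  unfold condKL negCondEnt crossEnt
  fun_prop

end Risk

lemma EReal.coe_integral_le_iSup {Θ : Type*} [MeasurableSpace Θ] {μ : Measure Θ}
    [IsProbabilityMeasure μ] {f : Θ → ℝ} (hf : Integrable f μ) :
    ((∫ θ, f θ ∂μ : ℝ) : EReal) ≤ ⨆ θ, (f θ : EReal) := by
  refine le_iSup_iff.2 fun b hb => ?_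
  induction b using EReal.rec with
  | bot =>
    obtain ⟨θ⟩ := nonempty_of_isProbabilityMeasure μ
    exact absurd (hb θ) (by simp)
  | coe c =>
    refine EReal.coe_le_coe_iff.2 ?_
    simpa using integral_mono hf (integrable_const c) fun θ => EReal.coe_le_coe_iff.1 (hb θ)
  | top => exact le_top

noncomputable def ProbabilityMeasure.mix {Θ : Type*} [MeasurableSpace Θ] (t : I)
    (μ ν : ProbabilityMeasure Θ) : ProbabilityMeasure Θ :=
  ⟨toNNReal t • (ν : Measure Θ) + toNNReal (σ t) • (μ : Measure Θ), inferInstance⟩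

lemma ProbabilityMeasure.integral_mix {Θ : Type*} [MeasurableSpace Θ] (t : I)
    (μ ν : ProbabilityMeasure Θ) {f : Θ → ℝ} (hμ : Integrable f μ) (hν : Integrable f ν) :
    ∫ θ, f θ ∂(mix t μ ν : Measure Θ)
      = (1 - t) * ∫ θ, f θ ∂(μ : Measure Θ) + t * ∫ θ, f θ ∂(ν : Measure Θ) := by
  simp only [mix, ProbabilityMeasure.coe_mk]
  rw [integral_add_measure hν.smul_measure_nnreal hμ.smul_measure_nnreal,
    integral_smul_nnreal_measure, integral_smul_nnreal_measure]
  simp [NNReal.smul_def]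
  ring

lemma pMix_nonneg {Θ X Y : Type*} [MeasurableSpace Θ] {p : X → Y → Θ → ℝ}
    (hp : ∀ x y θ, 0 ≤ p x y θ) (π : ProbabilityMeasure Θ) (x : X) (y : Y) :
    0 ≤ pMix p π x y :=
  integral_nonneg (hp x y)

section Measure

variable {Θ X Y : Type*} [TopologicalSpace Θ] [CompactSpace Θ] [MeasurableSpace Θ]
  [OpensMeasurableSpace Θ] [Fintype X] [Fintype Y] {p : X → Y → Θ → ℝ}

lemma Continuous.integrable_of_compactSpace {f : Θ → ℝ} (hf : Continuous f) (μ : Measure Θ)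
    [IsFiniteMeasure μ] : Integrable f μ :=
  hf.integrable_of_hasCompactSupport (HasCompactSupport.of_compactSpace f)

lemma condMutualInfo_eq_integral_sub (hc : ∀ x y, Continuous (p x y)) (π : ProbabilityMeasure Θ) :
    condMutualInfo p π = ∫ θ, negCondEnt (p · · θ) ∂(π : Measure Θ) - negCondEnt (pMix p π) := by
  simp only [negCondEnt]
  rw [integral_sub (Continuous.integrable_of_compactSpace (by fun_prop) _)
    (Continuous.integrable_of_compactSpace (by fun_prop) _), condMutualInfo]
  ring

lemma integral_crossEnt (hc : ∀ x y, Continuous (p x y)) (π : ProbabilityMeasure Θ)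
    (q : X → Y → ℝ) :
    ∫ θ, crossEnt (p · · θ) q ∂(π : Measure Θ) = crossEnt (pMix p π) q := by
  unfold crossEnt
  rw [integral_finsetSum _ fun x _ => Continuous.integrable_of_compactSpace (by fun_prop) _]
  refine Finset.sum_congr rfl fun x _ => ?_
  rw [integral_finsetSum _ fun y _ => Continuous.integrable_of_compactSpace (by fun_prop) _]
  exact Finset.sum_congr rfl fun y _ => integral_mul_const _ _

lemma integral_condKL (hc : ∀ x y, Continuous (p x y)) (π : ProbabilityMeasure Θ)
    (q : X → Y → ℝ) :
    ∫ θ, condKL (p · · θ) q ∂(π : Measure Θ)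
      = condMutualInfo p π + (negCondEnt (pMix p π) - crossEnt (pMix p π) q) := by
  simp only [condKL]
  rw [integral_sub (Continuous.integrable_of_compactSpace (by unfold negCondEnt; fun_prop) _)
    (Continuous.integrable_of_compactSpace (by unfold crossEnt; fun_prop) _),
    integral_crossEnt hc, condMutualInfo_eq_integral_sub hc]
  ring

lemma condMutualInfo_le_integral_condKL (hc : ∀ x y, Continuous (p x y))
    (hp : ∀ x y θ, 0 ≤ p x y θ) (π : ProbabilityMeasure Θ) {q : X → Y → ℝ}
    (hq : IsPredDensity q) (hsupp : ∀ x y, q x y = 0 → pMix p π x y = 0) :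
    condMutualInfo p π ≤ ∫ θ, condKL (p · · θ) q ∂(π : Measure Θ) := by
  rw [integral_condKL hc]
  linarith [crossEnt_le_negCondEnt (pMix_nonneg hp π) hq hsupp]

lemma integral_condKL_condPred_pMix (hc : ∀ x y, Continuous (p x y))
    (hp : ∀ x y θ, 0 ≤ p x y θ) (π : ProbabilityMeasure Θ) :
    ∫ θ, condKL (p · · θ) (condPred (pMix p π)) ∂(π : Measure Θ) = condMutualInfo p π := by
  rw [integral_condKL hc, crossEnt_condPred (pMix_nonneg hp π), sub_self, add_zero]

lemma condKL_condPred_mix_le_condMutualInfo (hc : ∀ x y, Continuous (p x y))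
    (hp : ∀ x y θ, 0 ≤ p x y θ) {πhat : ProbabilityMeasure Θ}
    (hmax : ∀ π : ProbabilityMeasure Θ, condMutualInfo p π ≤ condMutualInfo p πhat)
    (hpos : ∀ x, 0 < ∑ y, pMix p πhat x y) (θ₀ : Θ) {t : ℝ} (ht : t ∈ Set.Ioo 0 1) :
    condKL (p · · θ₀) (condPred ((1 - t) • pMix p πhat + t • (p · · θ₀)))
      ≤ condMutualInfo p πhat := by
  set π := ProbabilityMeasure.mix ⟨t, ht.1.le, ht.2.le⟩ πhat ⟨Measure.dirac θ₀, inferInstance⟩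
  have hint : ∀ f : Θ → ℝ, Continuous f →
      ∫ θ, f θ ∂(π : Measure Θ) = (1 - t) * ∫ θ, f θ ∂(πhat : Measure Θ) + t * f θ₀ := by
    intro f hf
    refine (ProbabilityMeasure.integral_mix _ _ _ (hf.integrable_of_compactSpace _)
      (hf.integrable_of_compactSpace _)).trans ?_
    exact congrArg _ (congrArg _ (integral_dirac' f θ₀ hf.stronglyMeasurable))
  have hmix : pMix p π = (1 - t) • pMix p πhat + t • (p · · θ₀) := by
    funext x y
    exact hint _ (hc x y)
  set q := condPred ((1 - t) • pMix p πhat + t • (p · · θ₀))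
  have hq : IsPredDensity q :=
    isPredDensity_condPred_mix (pMix_nonneg hp πhat) (hp · · θ₀) hpos ht
  have hsupp : ∀ x y, q x y = 0 → pMix p πhat x y = 0 := fun x y =>
    eq_zero_of_condPred_mix_eq_zero (pMix_nonneg hp πhat) (hp · · θ₀) (hpos x) ht
  have hπ : condMutualInfo p π
      = (1 - t) * ∫ θ, condKL (p · · θ) q ∂(πhat : Measure Θ) + t * condKL (p · · θ₀) q := by
    rw [← integral_condKL_condPred_pMix hc hp π, hmix, hint _ (continuous_condKL hc _)]
  have hhat := condMutualInfo_le_integral_condKL hc hp πhat hq hsupp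
  have hle : t * condKL (p · · θ₀) q ≤ t * condMutualInfo p πhat := by
    nlinarith [hmax π, mul_le_mul_of_nonneg_left hhat (sub_pos.2 ht.2).le]
  exact le_of_mul_le_mul_left hle ht.1

lemma risk_condPred_pMix_le_condMutualInfo (hc : ∀ x y, Continuous (p x y))
    (hp : ∀ x y θ, 0 ≤ p x y θ) {πhat : ProbabilityMeasure Θ}
    (hmax : ∀ π : ProbabilityMeasure Θ, condMutualInfo p π ≤ condMutualInfo p πhat)
    (hpos : ∀ x, 0 < ∑ y, pMix p πhat x y) (θ : Θ) :
    risk p (condPred (pMix p πhat)) θ ≤ condMutualInfo p πhat := by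
  have hC := fun t (ht : t ∈ Set.Ioo (0 : ℝ) 1) =>
    condKL_condPred_mix_le_condMutualInfo hc hp hmax hpos θ ht
  have hsupp : ∀ x y, condPred (pMix p πhat) x y = 0 → p x y θ = 0 := fun x y h =>
    eq_zero_of_forall_condKL_condPred_mix_le (pMix_nonneg hp πhat) (hp · · θ) hpos hC
      ((div_eq_zero_iff.1 h).resolve_right (hpos x).ne')
  rw [risk_eq_coe_condKL (hp · · θ) hsupp]
  exact EReal.coe_le_coe_iff.2 <| condKL_condPred_le_of_forall_condKL_condPred_mix_le
    (pMix_nonneg hp πhat) (hp · · θ) hpos hC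

lemma condMutualInfo_le_iSup_risk (hc : ∀ x y, Continuous (p x y))
    (hp : ∀ x y θ, 0 ≤ p x y θ) (π : ProbabilityMeasure Θ) {q : X → Y → ℝ}
    (hq : IsPredDensity q) : (condMutualInfo p π : EReal) ≤ ⨆ θ, risk p q θ := by
  by_cases hsupp : ∀ θ x y, q x y = 0 → p x y θ = 0
  · have hsuppMix : ∀ x y, q x y = 0 → pMix p π x y = 0 := fun x y h => by
      simp [pMix, hsupp _ x y h]
    simp_rw [risk_eq_coe_condKL (hp · · _) (hsupp _)]
    exact (EReal.coe_le_coe_iff.2 (condMutualInfo_le_integral_condKL hc hp π hq hsuppMix)).trans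
      (EReal.coe_integral_le_iSup ((continuous_condKL hc q).integrable_of_compactSpace _))
  · push Not at hsupp
    obtain ⟨θ, x, y, hq0, hpθ⟩ := hsupp
    exact le_top.trans ((risk_eq_top hq0 hpθ).symm.trans_le (le_iSup _ θ))

end Measure

theorem latent_information_prior_gives_minimax_general
    {Θ X Y : Type*} [MetricSpace Θ] [CompactSpace Θ]
    [MeasurableSpace Θ] [BorelSpace Θ] [Fintype X] [Fintype Y]
    (p : X → Y → Θ → ℝ)
    (hc : ∀ x y, Continuous (p x y))
    (hnn : ∀ x y θ, 0 ≤ p x y θ)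
    (πhat : ProbabilityMeasure Θ)
    (hmax : ∀ π : ProbabilityMeasure Θ, condMutualInfo p π ≤ condMutualInfo p πhat)
    (hpos : ∀ x : X, 0 < ∑ y : Y, pMix p πhat x y) :
    (⨆ θ : Θ, risk p (fun x y => pMix p πhat x y / ∑ y' : Y, pMix p πhat x y') θ)
      = ⨅ q : {q : X → Y → ℝ // IsPredDensity q}, ⨆ θ : Θ, risk p q.val θ := by
  have hBayes : IsPredDensity (condPred (pMix p πhat)) :=
    isPredDensity_condPred (pMix_nonneg hnn πhat) hpos
  refine le_antisymm (le_iInf fun q => ?_) (iInf_le_of_le ⟨_, hBayes⟩ le_rfl)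
  exact (iSup_le (risk_condPred_pMix_le_condMutualInfo hc hnn hmax hpos)).trans
    (condMutualInfo_le_iSup_risk hc hnn πhat q.2)

/-- Theorem 2, part 2: if `π̂` maximizes the conditional mutual information and
`p_{π̂}(x) > 0` for every `x`, then the Bayesian predictive density `p_{π̂}(y|x)` is minimax. -/
theorem latent_information_prior_gives_minimax
    {Θ X Y : Type*} [MetricSpace Θ] [CompactSpace Θ] [Nonempty Θ]
    [MeasurableSpace Θ] [BorelSpace Θ] [Fintype X] [Fintype Y]
    (p : X → Y → Θ → ℝ)
    (hc : ∀ x y, Continuous (p x y))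
    (hnn : ∀ x y θ, 0 ≤ p x y θ)
    (hsum : ∀ θ : Θ, ∑ x : X, ∑ y : Y, p x y θ = 1)
    (πhat : ProbabilityMeasure Θ)
    (hmax : ∀ π : ProbabilityMeasure Θ, condMutualInfo p π ≤ condMutualInfo p πhat)
    (hpos : ∀ x : X, 0 < ∑ y : Y, pMix p πhat x y) :
    (⨆ θ : Θ, risk p (fun x y => pMix p πhat x y / ∑ y' : Y, pMix p πhat x y') θ)
      = ⨅ q : {q : X → Y → ℝ // IsPredDensity q}, ⨆ θ : Θ, risk p q.val θ :=
  latent_information_prior_gives_minimax_general p hc hnn πhat hmax hpos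
end

section
/- In Example 2 of the paper with Θ = {θ1, θ2} and the given probabilities, the Bayesian-limit predictive density q*(y;x) defined by q*(y;x) = p(y|x,θ1) for x ∈ {0,1} and q*(y;x=2) = p(y|x=2,θ2) satisfies R(θ1, q*) = 0 and R(θ2, q*) = (ε/2) log(9/8), strictly smaller than the risks R(θ1,q)=0 and R(θ2,q) = (1/2) log(9/8) of the predictive density q given by q(0;0)=q(1;1)=2/3, q(1;0)=q(0;1)=1/3, q(0;2)=1/3, q(1;2)=2/3. -/
open Finset

/-- KL risk of a predictive density `q` for a fixed joint density `p` on `X × Y`. -/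
noncomputable def riskOf (p : Fin 3 → Fin 2 → ℝ) (q : Fin 3 → Fin 2 → ℝ) : EReal :=
  ∑ x : Fin 3, ∑ y : Fin 2,
    klTerm (p x y) (p x y / ∑ y' : Fin 2, p x y') (q x y)

/-- The joint density under `θ₁` in Example 2. -/
noncomputable def pTheta1 : Fin 3 → Fin 2 → ℝ := fun x y =>
  if x = 0 then (if y = 0 then 1/3 else 1/6)
  else if x = 1 then (if y = 0 then 1/6 else 1/3)
  else 0

/-- The joint density under `θ₂` in Example 2. -/
noncomputable def pTheta2 (ε : ℝ) : Fin 3 → Fin 2 → ℝ := fun x _ =>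
  if x = 2 then (1 - ε) / 2 else ε / 4

/-- The predictive density `q` of Example 2. -/
noncomputable def qEx : Fin 3 → Fin 2 → ℝ := fun x y =>
  if x = 0 then (if y = 0 then 2/3 else 1/3)
  else if x = 1 then (if y = 0 then 1/3 else 2/3)
  else (if y = 0 then 1/3 else 2/3)

/-- The Bayesian-limit predictive density `q*` of Example 2:
`q*(y;x) = p(y|x,θ₁)` for `x ∈ {0,1}` and `q*(y;2) = p(y|2,θ₂) = 1/2`. -/
noncomputable def qStarEx : Fin 3 → Fin 2 → ℝ := fun x y =>
  if x = 0 then (if y = 0 then 2/3 else 1/3)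
  else if x = 1 then (if y = 0 then 1/3 else 2/3)
  else 1/2

/-- Example 2: the Bayesian-limit predictive density `q*` has risks `0` at `θ₁` and
`(ε/2)·log(9/8)` at `θ₂`, strictly improving on `q`, whose risks are `0` and `(1/2)·log(9/8)`. -/
theorem example2_risks (ε : ℝ) (hε : 0 < ε) (hε1 : ε < 1) :
    riskOf pTheta1 qStarEx = 0 ∧
    riskOf (pTheta2 ε) qStarEx = ((ε / 2 * Real.log (9 / 8) : ℝ) : EReal) ∧
    riskOf pTheta1 qEx = 0 ∧
    riskOf (pTheta2 ε) qEx = ((1 / 2 * Real.log (9 / 8) : ℝ) : EReal) ∧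
    riskOf (pTheta2 ε) qStarEx < riskOf (pTheta2 ε) qEx := by
  have hne : ε ≠ 0 := ne_of_gt hε
  have hne1 : (1 : ℝ) - ε ≠ 0 := by linarith
  have hlog : Real.log (3/4) + Real.log (3/2) = Real.log (9/8) := by
    rw [← Real.log_mul (by norm_num) (by norm_num)]; norm_num
  have e1 : ε / 4 / (2 * (ε / 4)) = 1/2 := by field_simp
  have e2 : (1-ε)/2 / (2*((1-ε)/2)) = 1/2 := by field_simp
  have h1 : riskOf pTheta1 qStarEx = 0 := by
    simp [riskOf, klTerm, pTheta1, qStarEx, Fin.sum_univ_succ]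
    norm_num
  have h2 : riskOf (pTheta2 ε) qStarEx = ((ε / 2 * Real.log (9 / 8) : ℝ) : EReal) := by
    simp [riskOf, klTerm, pTheta2, qStarEx, Fin.sum_univ_succ, hne, hne1]
    rw [e1, e2]
    norm_num
    norm_cast
    linear_combination (ε/2) * hlog
  have h3 : riskOf pTheta1 qEx = 0 := by
    simp [riskOf, klTerm, pTheta1, qEx, Fin.sum_univ_succ]
    norm_num
  have h4 : riskOf (pTheta2 ε) qEx = ((1 / 2 * Real.log (9 / 8) : ℝ) : EReal) := by
    simp [riskOf, klTerm, pTheta2, qEx, Fin.sum_univ_succ, hne, hne1]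
    rw [e1, e2]
    norm_num
    norm_cast
    linear_combination (1/2 : ℝ) * hlog
  refine ⟨h1, h2, h3, h4, ?_⟩
  rw [h2, h4]
  have hlogpos : 0 < Real.log (9/8) := Real.log_pos (by norm_num)
  exact_mod_cast (by nlinarith : ε / 2 * Real.log (9/8) < 1/2 * Real.log (9/8))
end
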